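/- Consider m assets with bounds v_min,i, v_max,i satisfying -1 < v_min,i < 0 < v_max,i, feedback gains α_i ≥ 0 for i = 1,…,m, and initial value X_0 > 0, with state equation X(k+1) = X(k) + Σ_{i=1}^m α_i (1+v_i(k-1)) v_i(k) X(k-1), X(0) = X(1) = X_0. If 4·Σ_{i=1}^m α_i (1+v_min,i)|v_min,i| > 1, then there exist admissible return sequences v_i (i.e., v_min,i ≤ v_i(k) ≤ v_max,i for all k) and a stage k such that X(k) ≤ 0. -/

import Mathlib

/-!
With every return held at its lower bound, the account value satisfies the linear recurrence
`X(k+2) = X(k+1) - c X(k)` with `c = Σᵢ αᵢ (1 + v_min,i) |v_min,i| > 1/4`. Were all values positive,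
the ratios `r k = X(k+1) / X k` would obey `r (k+1) = 1 - c / r k`; by AM-GM `r + 1/(4r) ≥ 1`,
so as long as `r ≤ 1` every step lowers the ratio by at least `c - 1/4`, and it eventually turns
negative.
-/

/-- Multi-asset account value: `X(0) = X(1) = X0` and
`X(k+1) = X(k) + Σᵢ αᵢ (1 + vᵢ(k-1)) vᵢ(k) X(k-1)` for `k ≥ 1`. -/
noncomputable def accountXm (m : ℕ) (α : Fin m → ℝ) (X0 : ℝ) (v : Fin m → ℕ → ℝ) : ℕ → ℝ
  | 0 => X0
  | 1 => X0
  | (k + 2) => accountXm m α X0 v (k + 1) +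
      (∑ i, α i * (1 + v i k) * v i (k + 1)) * accountXm m α X0 v k

lemma one_sub_div_le_sub_of_le_one {r c : ℝ} (hr : 0 < r) (hr1 : r ≤ 1) (hc : 1 / 4 ≤ c) :
    1 - c / r ≤ r - (c - 1 / 4) := by
  have amgm : 1 ≤ r + 1 / (4 * r) := by
    rw [← sub_nonneg]
    have : r + 1 / (4 * r) - 1 = (2 * r - 1) ^ 2 / (4 * r) := by field_simp; ring
    rw [this]
    positivity
  have excess : c - 1 / 4 ≤ (c - 1 / 4) / r :=
    le_div_self (sub_nonneg.2 hc) hr hr1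
  have split : c / r = 1 / (4 * r) + (c - 1 / 4) / r := by field_simp; ring
  linarith

section Recurrence

variable {x : ℕ → ℝ} {c : ℝ}

lemma ratio_le_one_sub_mul (hrec : ∀ k, x (k + 2) = x (k + 1) - c * x k) (hc : 1 / 4 ≤ c)
    (hpos : ∀ k, 0 < x k) (k : ℕ) :
    x (k + 2) / x (k + 1) ≤ 1 - k * (c - 1 / 4) := by
  have ratio_succ : ∀ k, x (k + 2) / x (k + 1) = 1 - c / (x (k + 1) / x k) := fun k => by
    rw [hrec, div_div_eq_mul_div]
    field_simp [(hpos (k + 1)).ne']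
  induction k with
  | zero =>
    rw [ratio_succ]
    have : 0 ≤ c / (x 1 / x 0) := div_nonneg (by linarith) (div_pos (hpos 1) (hpos 0)).le
    simp only [CharP.cast_eq_zero, zero_mul, sub_zero]
    linarith
  | succ k ih =>
    have hk : (0 : ℝ) ≤ k * (c - 1 / 4) := mul_nonneg k.cast_nonneg (by linarith)
    have step := one_sub_div_le_sub_of_le_one (div_pos (hpos (k + 2)) (hpos (k + 1)))
      (by linarith) hc
    rw [ratio_succ]
    push_cast
    linarith

theorem exists_nonpos_of_recurrence (hrec : ∀ k, x (k + 2) = x (k + 1) - c * x k)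
    (hc : 1 / 4 < c) : ∃ k, x k ≤ 0 := by
  by_contra! hpos
  obtain ⟨n, hn⟩ := exists_nat_gt (1 / (c - 1 / 4))
  have hδ : 0 < c - 1 / 4 := by linarith
  have hnδ : 1 < n * (c - 1 / 4) := by rwa [div_lt_iff₀ hδ] at hn
  have hratio := ratio_le_one_sub_mul hrec hc.le hpos n
  have := div_pos (hpos (n + 2)) (hpos (n + 1))
  linarith

end Recurrence

lemma accountXm_const_add_two (m : ℕ) (α : Fin m → ℝ) (X0 : ℝ) (u : Fin m → ℝ) (k : ℕ) :
    accountXm m α X0 (fun i _ => u i) (k + 2) =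
      accountXm m α X0 (fun i _ => u i) (k + 1) +
        (∑ i, α i * (1 + u i) * u i) * accountXm m α X0 (fun i _ => u i) k :=
  rfl

theorem multi_asset_failure_general (m : ℕ) (vmin vmax : Fin m → ℝ) (α : Fin m → ℝ) (X0 : ℝ)
    (h2 : ∀ i, vmin i < 0) (h3 : ∀ i, 0 < vmax i)
    (hosc : 4 * ∑ i, α i * (1 + vmin i) * |vmin i| > 1) :
    ∃ v : Fin m → ℕ → ℝ,
      (∀ i k, vmin i ≤ v i k ∧ v i k ≤ vmax i) ∧
      ∃ k, accountXm m α X0 v k ≤ 0 := by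
  set c := ∑ i, α i * (1 + vmin i) * |vmin i|
  have hsum : ∑ i, α i * (1 + vmin i) * vmin i = -c := by
    rw [← Finset.sum_neg_distrib]
    refine Finset.sum_congr rfl fun i _ => ?_
    rw [abs_of_neg (h2 i)]
    ring
  refine ⟨fun i _ => vmin i, fun i _ => ⟨le_rfl, ((h2 i).trans (h3 i)).le⟩, ?_⟩
  refine exists_nonpos_of_recurrence (c := c) (fun k => ?_) (by linarith)
  rw [accountXm_const_add_two, hsum]
  ring

/-- Multi-asset oscillation result: if `4 Σᵢ αᵢ (1 + v_min,i) |v_min,i| > 1`,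
then there are admissible return sequences along which the account value fails
to stay positive. -/
theorem multi_asset_failure (m : ℕ) (vmin vmax : Fin m → ℝ) (α : Fin m → ℝ) (X0 : ℝ)
    (h1 : ∀ i, -1 < vmin i) (h2 : ∀ i, vmin i < 0) (h3 : ∀ i, 0 < vmax i)
    (hα : ∀ i, 0 ≤ α i) (hX0 : 0 < X0)
    (hosc : 4 * ∑ i, α i * (1 + vmin i) * |vmin i| > 1) :
    ∃ v : Fin m → ℕ → ℝ,
      (∀ i k, vmin i ≤ v i k ∧ v i k ≤ vmax i) ∧
      ∃ k, accountXm m α X0 v k ≤ 0 :=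
  multi_asset_failure_general m vmin vmax α X0 h2 h3 hosc
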